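/- arXiv:1010.0182 — 3 statements merged into one kernel-verified Lean document; each statement's English description precedes it below -/
import Mathlib

section
/- For nested lattices Λ₁ ⊆ Λ₂ and any t₂ in the fundamental region of Λ₂, t₁ ∈ Λ₂, u ∈ ℝ^n: letting T = (t₁ + t₂ - Q₂(t₂ + u)) mod Λ₁, one has ((T mod Λ₂) - t₁) mod Λ₂ = t₂ mod Λ₂. -/
/-- For nested lattices `Λ₁ ⊆ Λ₂` with coset-invariant nearest-neighbor quantizers,
`t₂` in the fundamental region of `Λ₂` (`Q₂ t₂ = 0`), `t₁ ∈ Λ₂`, and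
`T = (t₁ + t₂ - Q₂(t₂ + u)) mod Λ₁`, one has `((T mod Λ₂) - t₁) mod Λ₂ = t₂ mod Λ₂`. -/
theorem recover_t2_from_sum
    (n : ℕ) (Λ₁ Λ₂ : Submodule ℤ (EuclideanSpace ℝ (Fin n)))
    [DiscreteTopology Λ₁] [IsZLattice ℝ Λ₁] [DiscreteTopology Λ₂] [IsZLattice ℝ Λ₂]
    (hnested : Λ₁ ≤ Λ₂)
    (Q₁ Q₂ : EuclideanSpace ℝ (Fin n) → EuclideanSpace ℝ (Fin n))
    (hQ₁mem : ∀ x, Q₁ x ∈ Λ₁)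
    (hQ₁near : ∀ x, ∀ l ∈ Λ₁, ‖x - Q₁ x‖ ≤ ‖x - l‖)
    (hQ₁coset : ∀ x, ∀ l ∈ Λ₁, Q₁ (x + l) = Q₁ x + l)
    (hQ₂mem : ∀ x, Q₂ x ∈ Λ₂)
    (hQ₂near : ∀ x, ∀ l ∈ Λ₂, ‖x - Q₂ x‖ ≤ ‖x - l‖)
    (hQ₂coset : ∀ x, ∀ l ∈ Λ₂, Q₂ (x + l) = Q₂ x + l)
    (t₁ t₂ u : EuclideanSpace ℝ (Fin n)) (ht₁ : t₁ ∈ Λ₂) (ht₂ : Q₂ t₂ = 0)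
    (T : EuclideanSpace ℝ (Fin n))
    (hT : T = (t₁ + t₂ - Q₂ (t₂ + u)) - Q₁ (t₁ + t₂ - Q₂ (t₂ + u))) :
    ((T - Q₂ T) - t₁) - Q₂ ((T - Q₂ T) - t₁) = t₂ - Q₂ t₂ := by
  set y := t₁ + t₂ - Q₂ (t₂ + u) with hy
  have hl₁ : Q₁ y ∈ Λ₂ := hnested (hQ₁mem y)
  have hTmod : T - Q₂ T = y - Q₂ y := by
    have : Q₂ T = Q₂ y - Q₁ y := by
      have := hQ₂coset y (-(Q₁ y)) (neg_mem hl₁)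
      rw [hT]
      simpa [sub_eq_add_neg] using this
    rw [hT] at this ⊢; rw [this]; abel
  have hlmem : t₁ - Q₂ (t₂ + u) ∈ Λ₂ := sub_mem ht₁ (hQ₂mem _)
  have hQy : Q₂ y = t₁ - Q₂ (t₂ + u) := by
    have := hQ₂coset t₂ (t₁ - Q₂ (t₂ + u)) hlmem
    have hy' : y = t₂ + (t₁ - Q₂ (t₂ + u)) := by rw [hy]; abel
    rw [hy', this, ht₂, zero_add]
  have hy2 : y - Q₂ y = t₂ := by rw [hQy, hy]; abel
  rw [hTmod, hy2]
  have h3 : Q₂ (t₂ - t₁) = -t₁ := by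
    have := hQ₂coset t₂ (-t₁) (neg_mem ht₁)
    simpa [sub_eq_add_neg, ht₂] using this
  rw [h3, ht₂]; abel
end

section
/- For all P₁, P₂, N_R > 0, max( (1/2)log₂( 2P₁/(P₁+P₂) + 2P₁/N_R ), 1/2 ) ≥ (1/2)log₂(1 + P₁/N_R). -/
/-- The relay-decoding term of the lattice scheme is within 1/2 bit of the corresponding
cut-set bound term: `max((1/2)log₂(2P₁/(P₁+P₂) + 2P₁/N_R), 1/2) ≥ (1/2)log₂(1 + P₁/N_R)`. -/
theorem relay_term_half_bit_gap
    (P₁ P₂ NR : ℝ) (hP₁ : 0 < P₁) (hP₂ : 0 < P₂) (hNR : 0 < NR) :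
    max ((1 / 2) * Real.logb 2 (2 * P₁ / (P₁ + P₂) + 2 * P₁ / NR)) (1 / 2)
      ≥ (1 / 2) * Real.logb 2 (1 + P₁ / NR) := by
  have hx : 0 < P₁ / NR := div_pos hP₁ hNR
  rcases le_or_gt (P₁ / NR) 1 with h | h
  · refine le_trans ?_ (le_max_right _ _)
    have : Real.logb 2 (1 + P₁ / NR) ≤ 1 := by
      calc Real.logb 2 (1 + P₁ / NR) ≤ Real.logb 2 2 :=
              Real.logb_le_logb_of_le (by norm_num) (by linarith) (by linarith)
        _ = 1 := Real.logb_self_eq_one (by norm_num)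
    linarith
  · refine le_trans ?_ (le_max_left _ _)
    have harg : 1 + P₁ / NR ≤ 2 * P₁ / (P₁ + P₂) + 2 * P₁ / NR := by
      have h1 : 0 ≤ 2 * P₁ / (P₁ + P₂) := by positivity
      have h2 : 2 * P₁ / NR = P₁ / NR + P₁ / NR := by ring
      linarith
    have := Real.logb_le_logb_of_le (by norm_num : (1:ℝ) < 2) (by positivity) harg
    linarith
end

section
/- Half-bit gap for the degraded two-way relay channel: for all P₁, P₂, P_R, N_R, N₂′ > 0 and every α₁ ∈ [0,1], min( max( (1/2)log₂(2P₁/(P₁+P₂) + 2P₁/N_R), 1/2 ), (1/2)log₂(2 + 2(P₁+P_R)/(N₂′+N_R)) ) ≥ min( (1/2)log₂(1 + α₁P₁/N_R), (1/2)log₂(1 + (P₁ + P_R + 2√((1-α₁)P₁P_R))/(N₂′+N_R)) ). Equivalently, the achievable rate max(0, ...) plus 1/2 exceeds the cut-set bound R_{OD1}. -/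
/-!
Compare the two minima term by term. On the relay–destination side the correlated
term `2√((1-α₁)P₁P_R)` is at most `2√(P₁P_R) ≤ P₁ + P_R` (AM–GM), so the cut-set
SNR is at most `2 + 2(P₁+P_R)/(N₂'+N_R)`. On the source–relay side,
`1 + x ≤ max 2 (2x)` with `x = α₁P₁/N_R ≤ P₁/N_R`, and taking `½ log₂` turns the
`2` into the extra half bit.
-/

open Real

theorem Real.logb_max {b x y : ℝ} (hb : 1 < b) (hx : 0 < x) (hy : 0 < y) :
    logb b (max x y) = max (logb b x) (logb b y) := by
  rcases le_total x y with h | h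
  · rw [max_eq_right h, max_eq_right (logb_le_logb_of_le hb hx h)]
  · rw [max_eq_left h, max_eq_left (logb_le_logb_of_le hb hy h)]

theorem Real.two_mul_sqrt_mul_le_add {x y : ℝ} (hx : 0 ≤ x) (hy : 0 ≤ y) :
    2 * √(x * y) ≤ x + y := by
  rw [sqrt_mul hx]
  simpa [sq_sqrt hx, sq_sqrt hy, mul_assoc] using two_mul_le_add_sq √x √y

theorem add_add_two_mul_sqrt_le {x y t : ℝ} (hx : 0 ≤ x) (hy : 0 ≤ y) (ht : t ≤ 1) :
    x + y + 2 * √(t * x * y) ≤ 2 * (x + y) := by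
  have : √(t * x * y) ≤ √(x * y) :=
    sqrt_le_sqrt (by nlinarith [mul_nonneg hx hy])
  linarith [two_mul_sqrt_mul_le_add hx hy]

theorem half_logb_two_le_half_logb_two {u v : ℝ} (hu : 0 < u) (huv : u ≤ v) :
    1 / 2 * logb 2 u ≤ 1 / 2 * logb 2 v :=
  mul_le_mul_of_nonneg_left (logb_le_logb_of_le one_lt_two hu huv) (by norm_num)

theorem half_logb_two_max_two {y : ℝ} (hy : 0 < y) :
    1 / 2 * logb 2 (max y 2) = max (1 / 2 * logb 2 y) (1 / 2) := by
  rw [logb_max one_lt_two hy two_pos, logb_self_eq_one one_lt_two,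
    mul_max_of_nonneg _ _ (by norm_num), mul_one]

/-- Half-bit gap for the degraded two-way relay channel: the achievable rate of the
lattice scheme shifted by 1/2 bit dominates the cut-set bound term for every power
split `α₁ ∈ [0,1]`. -/
theorem half_bit_gap_two_way_relay
    (P₁ P₂ PR NR N₂' : ℝ) (hP₁ : 0 < P₁) (hP₂ : 0 < P₂) (hPR : 0 < PR)
    (hNR : 0 < NR) (hN₂' : 0 < N₂')
    (α₁ : ℝ) (hα₁ : α₁ ∈ Set.Icc (0 : ℝ) 1) :
    min (max ((1 / 2) * Real.logb 2 (2 * P₁ / (P₁ + P₂) + 2 * P₁ / NR)) (1 / 2))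
        ((1 / 2) * Real.logb 2 (2 + 2 * (P₁ + PR) / (N₂' + NR)))
      ≥ min ((1 / 2) * Real.logb 2 (1 + α₁ * P₁ / NR))
          ((1 / 2) * Real.logb 2
            (1 + (P₁ + PR + 2 * Real.sqrt ((1 - α₁) * P₁ * PR)) / (N₂' + NR))) := by
  obtain ⟨hα₀, hα₁⟩ := hα₁
  have hN : 0 < N₂' + NR := by linarith
  refine le_min ((min_le_left _ _).trans ?_) ((min_le_right _ _).trans ?_)
  · have hx : α₁ * P₁ / NR ≤ P₁ / NR := by gcongr; nlinarith
    have hy : 2 * P₁ / NR ≤ 2 * P₁ / (P₁ + P₂) + 2 * P₁ / NR := by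
      have : 0 < 2 * P₁ / (P₁ + P₂) := by positivity
      linarith
    rw [← half_logb_two_max_two (by positivity)]
    refine half_logb_two_le_half_logb_two (by positivity) ?_
    rcases le_total (α₁ * P₁ / NR) 1 with h | h
    · exact le_max_of_le_right (by linarith)
    · exact le_max_of_le_left (by linarith [mul_div_assoc 2 P₁ NR])
  · refine half_logb_two_le_half_logb_two (by positivity) ?_
    have := div_le_div_of_nonneg_right
      (add_add_two_mul_sqrt_le hP₁.le hPR.le (by linarith : 1 - α₁ ≤ 1)) hN.le
    linarith
end
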